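/- arXiv:2112.02711 — 3 statements merged into one kernel-verified Lean document; each statement's English description precedes it below -/
import Mathlib

section
/- Suppose q₊(z) = ∏_{k=1}^{n}(z − w_k) with distinct roots w_k, Λ(z) = ∏_{j=1}^{N}(z − z_j)^{ℓ_j} with each z_j distinct from all w_k, and there exists a polynomial q₋ with W(q₊,q₋) + 2ζ·q₊·q₋ = Λ. Then for each i = 1,...,n the Bethe Ansatz equation holds: 2ζ + Σ_{j=1}^{N} ℓ_j/(w_i − z_j) − Σ_{k≠i} 2/(w_i − w_k) = 0. -/
open Polynomial

lemma key_deriv_prod {ι : Type*} [DecidableEq ι] (s : Finset ι) (z : ι → ℂ) (ℓ : ι → ℕ) (x : ℂ)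
    (hx : ∀ j ∈ s, x ≠ z j) :
    eval x (derivative (∏ j ∈ s, (X - C (z j)) ^ (ℓ j))) =
      (∏ j ∈ s, (x - z j) ^ (ℓ j)) * ∑ j ∈ s, (ℓ j : ℂ) / (x - z j) := by
  induction s using Finset.induction_on with
  | empty => simp
  | @insert a s ha ih =>
    rw [Finset.prod_insert ha, Finset.prod_insert ha, Finset.sum_insert ha, derivative_mul,
      eval_add, eval_mul, eval_mul, ih (fun j hj => hx j (Finset.mem_insert_of_mem hj))]
    have hxa : x - z a ≠ 0 := sub_ne_zero.mpr (hx a (Finset.mem_insert_self a s))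
    simp only [derivative_pow, derivative_sub, derivative_X, derivative_C, sub_zero, mul_one,
      eval_mul, eval_prod, eval_pow, eval_sub, eval_X, eval_C, eval_natCast]
    cases h : ℓ a with
    | zero => simp
    | succ m =>
      simp only [Nat.succ_sub_one, pow_succ, Nat.cast_succ]
      field_simp

/-- From a polynomial solution of the SL(2) qq-equation one obtains the
Bethe Ansatz equations for the roots of `q₊`. -/
theorem stmt_3 (ζ : ℂ) (n N : ℕ) (w : Fin n → ℂ) (z : Fin N → ℂ) (ℓ : Fin N → ℕ)
    (hw : Function.Injective w) (hwz : ∀ i j, w i ≠ z j)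
    (qp Λ : Polynomial ℂ)
    (hqp : qp = ∏ k, (X - C (w k)))
    (hΛ : Λ = ∏ j, (X - C (z j)) ^ (ℓ j))
    (hqq : ∃ qm : Polynomial ℂ,
      qp * derivative qm - qm * derivative qp + C (2 * ζ) * (qp * qm) = Λ) :
    ∀ i, 2 * ζ + (∑ j, (ℓ j : ℂ) / (w i - z j))
      - ∑ k ∈ Finset.univ.erase i, 2 / (w i - w k) = 0 := by
  obtain ⟨qm, hqq⟩ := hqq
  intro i
  set x := w i with hxdef
  -- the cofactor g
  set g : Polynomial ℂ := ∏ k ∈ Finset.univ.erase i, (X - C (w k)) with hg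
  have hqpf : qp = (X - C (w i)) * g := by
    rw [hqp, hg, ← Finset.mul_prod_erase _ _ (Finset.mem_univ i)]
  -- evaluations of g and Λ
  have hA : eval x g = ∏ k ∈ Finset.univ.erase i, (x - w k) := by
    simp [hg, eval_prod]
  have hA0 : eval x g ≠ 0 := by
    rw [hA]
    apply Finset.prod_ne_zero_iff.mpr
    intro k hk
    exact sub_ne_zero.mpr fun h => (Finset.mem_erase.mp hk).1 (hw (h ▸ rfl)).symm
  have hL : eval x Λ = ∏ j, (x - z j) ^ (ℓ j) := by
    simp [hΛ, eval_prod]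
  have hL0 : eval x Λ ≠ 0 := by
    rw [hL]
    apply Finset.prod_ne_zero_iff.mpr
    intro j _
    exact pow_ne_zero _ (sub_ne_zero.mpr (hwz i j))
  -- logarithmic derivatives
  have hdL : eval x (derivative Λ) =
      eval x Λ * ∑ j, (ℓ j : ℂ) / (x - z j) := by
    rw [hΛ, key_deriv_prod _ _ _ _ (fun j _ => hwz i j)]
    simp [eval_prod, hxdef]
  have hdg : eval x (derivative g) =
      eval x g * ∑ k ∈ Finset.univ.erase i, (1 : ℂ) / (x - w k) := by
    have := key_deriv_prod (Finset.univ.erase i) w (fun _ => 1) x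
      (fun k hk => fun h => (Finset.mem_erase.mp hk).1 (hw h).symm)
    simpa [hA, Nat.cast_one] using this
  -- evaluate qp and its derivatives at x
  have hqp0 : eval x qp = 0 := by simp [hqpf, hxdef]
  have hdqp : eval x (derivative qp) = eval x g := by
    rw [hqpf]
    simp [derivative_mul, hxdef]
  have hddqp : eval x (derivative (derivative qp)) = 2 * eval x (derivative g) := by
    rw [hqpf]
    simp [derivative_mul]
    ring
  -- evaluate the qq-equation and its derivative at x
  have h1 := congrArg (eval x) hqq
  have h2 := congrArg (eval x) (congrArg derivative hqq)
  simp only [derivative_add, derivative_sub, derivative_mul, derivative_C, zero_mul,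
    eval_add, eval_sub, eval_mul, eval_C, hqp0, zero_add, mul_zero, add_zero] at h1 h2
  rw [hdqp] at h1
  rw [hdqp, hddqp, hdg, hdL] at h2
  -- h1 : -(eval x qm * eval x g) = eval x Λ  (roughly)
  set A := eval x g
  set B := eval x qm
  set L := eval x Λ
  set SΛ := ∑ j, (ℓ j : ℂ) / (x - z j)
  set Sg := ∑ k ∈ Finset.univ.erase i, (1 : ℂ) / (x - w k)
  have hsum : ∑ k ∈ Finset.univ.erase i, (2 : ℂ) / (x - w k) = 2 * Sg := by
    rw [Finset.mul_sum]
    exact Finset.sum_congr rfl fun k _ => by ring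
  rw [hsum]
  have hkey : L * (2 * ζ + SΛ - 2 * Sg) = 0 := by
    linear_combination (2 * Sg - 2 * ζ) * h1 - h2
  exact (mul_eq_zero.mp hkey).resolve_left hL0
end

section
/- Suppose q₊, q₋ and q₊, q̃₋ are two polynomial solutions of W(q₊,q₋) + ξ·q₊·q₋ = F with the same q₊ ≠ 0 and the same right-hand side F, where ξ ≠ 0. Then q₋ = q̃₋. -/
open Polynomial

/-- Uniqueness of the negative polynomial in the qq-system with nonzero twist:
if `(q₊,q₋)` and `(q₊,q̃₋)` both solve `W(q₊,·) + ξ q₊ · = F` with `ξ ≠ 0`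
and `q₊ ≠ 0`, then `q₋ = q̃₋`. -/
theorem stmt_8 (ξ : ℂ) (hξ : ξ ≠ 0) (qp qm qtm F : Polynomial ℂ) (hqp : qp ≠ 0)
    (h1 : qp * derivative qm - qm * derivative qp + C ξ * (qp * qm) = F)
    (h2 : qp * derivative qtm - qtm * derivative qp + C ξ * (qp * qtm) = F) :
    qm = qtm := by
  by_contra hne
  set d : Polynomial ℂ := qm - qtm with hd
  have hdne : d ≠ 0 := sub_ne_zero.mpr hne
  -- subtract the two equations
  have key : qp * (derivative d + C ξ * d) = d * derivative qp := by
    have h3 : qp * derivative qm - qm * derivative qp + C ξ * (qp * qm)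
        - (qp * derivative qtm - qtm * derivative qp + C ξ * (qp * qtm)) = 0 := by
      rw [h1, h2, sub_self]
    simp only [hd, derivative_sub]
    ring_nf
    ring_nf at h3
    linear_combination h3
  set n := d.natDegree with hn
  set g : Polynomial ℂ := derivative d + C ξ * d with hg
  have hgcoeff : g.coeff n = ξ * d.coeff n := by
    rcases Nat.eq_zero_or_pos n with h0 | hpos
    · have : derivative d = 0 := by
        have h0' : d.natDegree = 0 := hn ▸ h0
        obtain ⟨c, hc⟩ := Polynomial.natDegree_eq_zero.mp h0'
        rw [← hc]; simp
      simp [hg, this, coeff_C_mul]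
    · have hlt : (derivative d).natDegree < n := Polynomial.natDegree_derivative_lt (by omega)
      have : (derivative d).coeff n = 0 := Polynomial.coeff_eq_zero_of_natDegree_lt hlt
      simp [hg, this, coeff_C_mul]
  have hcne : d.coeff n ≠ 0 := Polynomial.leadingCoeff_ne_zero.mpr hdne
  have hgne : g ≠ 0 := by
    intro h
    rw [h] at hgcoeff
    simp at hgcoeff
    exact absurd hgcoeff (by simp [hξ, hcne])
  have hgdeg : g.natDegree = n := by
    have hle : g.natDegree ≤ n := by
      apply le_trans (Polynomial.natDegree_add_le _ _)
      simp only [max_le_iff]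
      exact ⟨(Polynomial.natDegree_derivative_le d).trans (Nat.sub_le _ _),
        le_trans (Polynomial.natDegree_mul_le) (by simp [hn])⟩
    have hge : n ≤ g.natDegree := Polynomial.le_natDegree_of_ne_zero (by
      rw [hgcoeff]; exact mul_ne_zero hξ hcne)
    omega
  -- derivative qp ≠ 0
  have hdqp : derivative qp ≠ 0 := by
    intro h
    rw [h, mul_zero] at key
    exact (mul_ne_zero hqp hgne) key
  have hqpdeg : qp.natDegree ≠ 0 := by
    intro h
    have : derivative qp = 0 := by
      rw [Polynomial.eq_C_of_natDegree_eq_zero h]; simp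
    exact hdqp this
  have hdlt : (derivative qp).natDegree < qp.natDegree :=
    Polynomial.natDegree_derivative_lt hqpdeg
  have hleft : (qp * g).natDegree = qp.natDegree + n := by
    rw [Polynomial.natDegree_mul hqp hgne, hgdeg]
  have hright : (d * derivative qp).natDegree = n + (derivative qp).natDegree := by
    rw [Polynomial.natDegree_mul hdne hdqp]
  rw [key, hright] at hleft
  omega
end

section
/- Let y = P₁/P₂ with P₁, P₂ coprime polynomials, P₂ ≠ 0, and Λ a nonzero polynomial whose roots are distinct from the zeros and poles of y, with y having no multiple zeros or poles. Among nonzero polynomials h such that h·y is a polynomial and the polynomial Λ·h² has all roots distinct from the zeros of h·y, exactly the scalar multiples h = a·P₂ (a ∈ ℂ*) occur; i.e., h must be an associate of P₂. -/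
open Polynomial

lemma coprime_eval {P₁ P₂ : Polynomial ℂ} (hcop : IsCoprime P₁ P₂) (z : ℂ)
    (h1 : P₁.eval z = 0) (h2 : P₂.eval z = 0) : False := by
  obtain ⟨u, v, huv⟩ := hcop
  have := congrArg (Polynomial.eval z) huv
  simp [h1, h2] at this

/-- Lemma 3.5 (nondegsl2): let `y = P₁/P₂` with `P₁, P₂` coprime, `P₂ ≠ 0`,
`y` with no multiple zeros or poles, and `Λ ≠ 0` with roots distinct from the
zeros and poles of `y`.  Then a nonzero polynomial `h` satisfies:
`h·y` is a polynomial (say `q`, with `h·P₁ = q·P₂`) whose roots avoid all the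
roots of `Λ·h²`, if and only if `h` is a nonzero scalar multiple of `P₂`. -/
theorem stmt_15 (P₁ P₂ Λ : Polynomial ℂ)
    (hcop : IsCoprime P₁ P₂) (hP₂ : P₂ ≠ 0) (hP₁ : P₁ ≠ 0) (hΛ : Λ ≠ 0)
    (hsq₁ : Squarefree P₁) (hsq₂ : Squarefree P₂)
    (hΛy : ∀ z : ℂ, Λ.eval z = 0 → P₁.eval z ≠ 0 ∧ P₂.eval z ≠ 0)
    (h : Polynomial ℂ) (hh : h ≠ 0) :
    (∃ q : Polynomial ℂ, h * P₁ = q * P₂ ∧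
        ∀ z : ℂ, (Λ * h ^ 2).eval z = 0 → q.eval z ≠ 0)
    ↔ ∃ a : ℂ, a ≠ 0 ∧ h = C a * P₂ := by
  constructor
  · rintro ⟨q, heq, hroot⟩
    have hdvd : P₂ ∣ h := by
      have hd : P₂ ∣ P₁ * h := ⟨q, by rw [mul_comm P₁ h, heq, mul_comm]⟩
      exact hcop.symm.dvd_of_dvd_mul_left hd
    obtain ⟨g, hg⟩ := hdvd
    have hg0 : g ≠ 0 := by rintro rfl; simp at hg; exact hh hg
    have hq : q = g * P₁ := by
      have : (g * P₁) * P₂ = q * P₂ := by rw [← heq, hg]; ring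
      exact (mul_right_cancel₀ hP₂ this).symm
    have hgdeg : g.natDegree = 0 := by
      by_contra hd
      have : 0 < g.degree := natDegree_pos_iff_degree_pos.mp (Nat.pos_of_ne_zero hd)
      obtain ⟨z, hz⟩ := Complex.exists_root this
      have hz' : g.eval z = 0 := hz
      have hhz : h.eval z = 0 := by rw [hg]; simp [hz']
      have : (Λ * h ^ 2).eval z = 0 := by simp [hhz]
      exact hroot z this (by rw [hq]; simp [hz'])
    refine ⟨g.coeff 0, fun h0 => hg0 (by rw [eq_C_of_natDegree_eq_zero hgdeg, h0]; simp), ?_⟩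
    rw [hg, mul_comm, ← eq_C_of_natDegree_eq_zero hgdeg]
  · rintro ⟨a, ha, rfl⟩
    refine ⟨C a * P₁, by ring, fun z hz => ?_⟩
    simp only [eval_mul, eval_pow, eval_C, mul_eq_zero] at hz
    intro h0
    rcases (show a = 0 ∨ P₁.eval z = 0 by simpa using h0) with h1 | h1
    · exact ha h1
    · rcases hz with hΛz | hz
      · exact (hΛy z hΛz).1 h1
      · have h2 : (C a * P₂).eval z = 0 := by
          have : ((C a * P₂).eval z) ^ 2 = 0 := by simpa using hz
          exact pow_eq_zero_iff (n := 2) (by norm_num) |>.mp this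
        simp only [eval_mul, eval_C, mul_eq_zero] at h2
        rcases h2 with h2 | h2
        · exact ha h2
        · exact coprime_eval hcop z h1 h2
end
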